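/- Let (H, Q) be a real symplectic vector space of dimension 2n, S an isotropic subspace of H of dimension m, and η(S) the space of infinitesimally symplectic endomorphisms N of H with range N ⊆ S. Then the linear map sending N ∈ η(S) to the symmetric bilinear form on H/S^⊥ induced by φ_N(v, w) = Q(v, Nw) is a linear isomorphism from η(S) onto the space of all symmetric bilinear forms on H/S^⊥; in particular, dim η(S) = m(m+1)/2, so η(S) is linearly isomorphic to the space Sym(m, ℝ) of symmetric m × m real matrices. -/

import Mathlib

/-- The `Q`-orthogonal complement of a subspace `S`:
`S^⊥ = {w : Q(s, w) = 0 for all s ∈ S}`. -/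
def perp {H : Type*} [AddCommGroup H] [Module ℝ H]
    (Q : H →ₗ[ℝ] H →ₗ[ℝ] ℝ) (S : Submodule ℝ H) : Submodule ℝ H where
  carrier := {w | ∀ s ∈ S, Q s w = 0}
  add_mem' := by
    intro a b ha hb s hs
    simp [map_add, ha s hs, hb s hs]
  zero_mem' := by
    intro s hs
    simp
  smul_mem' := by
    intro c a ha s hs
    simp [map_smul, ha s hs]

/-- The space `η(S)` of infinitesimally symplectic endomorphisms of `H`
whose range is contained in `S`, as a linear subspace of `End(H)`. -/
def etaSub {H : Type*} [AddCommGroup H] [Module ℝ H]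
    (Q : H →ₗ[ℝ] H →ₗ[ℝ] ℝ) (S : Submodule ℝ H) : Submodule ℝ (H →ₗ[ℝ] H) where
  carrier := {N | (∀ v w, Q (N v) w + Q v (N w) = 0) ∧ ∀ v, N v ∈ S}
  add_mem' := by
    rintro N N' ⟨h1, h2⟩ ⟨h1', h2'⟩
    refine ⟨fun v w => ?_, fun v => ?_⟩
    · simp only [LinearMap.add_apply, map_add]
      linarith [h1 v w, h1' v w]
    · exact S.add_mem (h2 v) (h2' v)
  zero_mem' := by
    refine ⟨fun v w => ?_, fun v => ?_⟩
    · simp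
    · simp [Submodule.zero_mem]
  smul_mem' := by
    rintro c N ⟨h1, h2⟩
    refine ⟨fun v w => ?_, fun v => ?_⟩
    · simp only [LinearMap.smul_apply, map_smul, smul_eq_mul]
      linear_combination c * h1 v w
    · exact S.smul_mem c (h2 v)

/-- The space of symmetric bilinear forms on a real vector space `V`. -/
noncomputable def symBilinForms (V : Type*) [AddCommGroup V] [Module ℝ V] :
    Submodule ℝ (V →ₗ[ℝ] V →ₗ[ℝ] ℝ) where
  carrier := {B | ∀ v w, B v w = B w v}
  add_mem' := by
    intro B C hB hC v w
    simp [hB v w, hC v w]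
  zero_mem' := by
    intro v w
    simp
  smul_mem' := by
    intro c B hB v w
    simp [hB v w]

/-- The space `Sym(m, ℝ)` of symmetric `m × m` real matrices. -/
def symMat (m : ℕ) : Submodule ℝ (Matrix (Fin m) (Fin m) ℝ) where
  carrier := {A | A.IsSymm}
  add_mem' := by
    intro A B hA hB
    simp only [Set.mem_setOf_eq, Matrix.IsSymm] at *
    rw [Matrix.transpose_add, hA, hB]
  zero_mem' := by
    simp only [Set.mem_setOf_eq, Matrix.IsSymm, Matrix.transpose_zero]
  smul_mem' := by
    intro c A hA
    simp only [Set.mem_setOf_eq, Matrix.IsSymm] at *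
    rw [Matrix.transpose_smul, hA]

/-!
Because `Q` is alternating, for `N ∈ η(S)` the form `Q(v, N w)` is symmetric, and since `N` has
range in `S` it vanishes once either argument lies in `S^⊥`; so it descends to `H/S^⊥`.
Nondegeneracy makes `N ↦ Q(·, N ·)` injective, and, identifying `H` with its dual through `Q`,
every bilinear form `B` on `H/S^⊥` is `Q(v, N w)` for some endomorphism `N`; this `N` is
infinitesimally symplectic because `B` is symmetric, and its range lies in `(S^⊥)^⊥ = S`.
Finally `dim H/S^⊥ = dim S = m`, and symmetric forms on an `m`-dimensional space are symmetric
`m × m` matrices, which are functions on unordered pairs of indices.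
-/

open LinearMap (BilinForm)
open LinearMap.BilinForm Module

lemma mem_symBilinForms_iff {V : Type*} [AddCommGroup V] [Module ℝ V] {B : BilinForm ℝ V} :
    B ∈ symBilinForms V ↔ B.IsSymm :=
  isSymm_def.symm

noncomputable def symMatEquivSym2 (m : ℕ) : symMat m ≃ₗ[ℝ] (Sym2 (Fin m) → ℝ) where
  toFun A := Sym2.lift ⟨fun i j => A.1 i j, fun i j => (A.2 : A.1.IsSymm).apply j i⟩
  invFun f := ⟨Matrix.of fun i j => f s(i, j),
    Matrix.IsSymm.ext fun i j => by simp [Sym2.eq_swap]⟩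
  left_inv A := by ext i j; simp
  right_inv f := by funext p; induction p with | _ i j => simp
  map_add' A B := by funext p; induction p with | _ i j => simp
  map_smul' c A := by funext p; induction p with | _ i j => simp

lemma finrank_symMat (m : ℕ) : finrank ℝ (symMat m) = m * (m + 1) / 2 := by
  rw [(symMatEquivSym2 m).finrank_eq, finrank_fintype_fun_eq_card, Sym2.card]
  simp [Nat.choose_two_right, Nat.mul_comm]

noncomputable def symBilinFormsEquivSymMat {V : Type*} [AddCommGroup V] [Module ℝ V]
    [FiniteDimensional ℝ V] {m : ℕ} (hV : finrank ℝ V = m) : symBilinForms V ≃ₗ[ℝ] symMat m :=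
  (toMatrix (finBasisOfFinrankEq ℝ V hV)).ofSubmodules _ _ <| by
    ext A
    rw [Submodule.map_equiv_eq_comap_symm, toMatrix_symm, Submodule.mem_comap,
      mem_symBilinForms_iff, LinearEquiv.coe_coe, Matrix.isSymm_toBilin_iff_isSymm]
    rfl

lemma Submodule.Quotient.bilin_ext {R M P : Type*} [CommRing R] [AddCommGroup M] [Module R M]
    [AddCommGroup P] [Module R P] {p : Submodule R M} {B C : M ⧸ p →ₗ[R] M ⧸ p →ₗ[R] P}
    (h : ∀ v w, B (mk v) (mk w) = C (mk v) (mk w)) : B = C :=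
  linearMap_qext _ <| LinearMap.ext fun v => linearMap_qext _ <| LinearMap.ext fun w => h v w

section Eta

variable {H : Type*} [AddCommGroup H] [Module ℝ H] {Q : BilinForm ℝ H} {S : Submodule ℝ H}

lemma finrank_quotient_perp [FiniteDimensional ℝ H] (hQ : Q.Nondegenerate) :
    finrank ℝ (H ⧸ perp Q S) = finrank ℝ S := by
  have hquot := (perp Q S).finrank_quotient_add_finrank
  have hperp : finrank ℝ (perp Q S) = finrank ℝ H - finrank ℝ S := finrank_orthogonal hQ S
  have := S.finrank_le
  omega

lemma apply_comm_of_mem_etaSub (hQ : Q.IsAlt) {N : H →ₗ[ℝ] H} (hN : N ∈ etaSub Q S) (v w : H) :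
    Q v (N w) = Q w (N v) := by
  rw [← hQ.neg_eq, neg_eq_iff_add_eq_zero]
  exact hN.1 w v

lemma perp_le_ker_compl₂ (hQ : Q.IsRefl) {N : H →ₗ[ℝ] H} (hN : N ∈ etaSub Q S) :
    perp Q S ≤ LinearMap.ker (Q.compl₂ N) :=
  fun _ hv => LinearMap.ext fun w => hQ _ _ (hv _ (hN.2 w))

noncomputable def etaToSymBilin (hQ : Q.IsAlt) :
    etaSub Q S →ₗ[ℝ] symBilinForms (H ⧸ perp Q S) where
  toFun N := ⟨LinearMap.IsRefl.liftQ₂ (Q.compl₂ N) _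
      (fun v w h => by simpa [apply_comm_of_mem_etaSub hQ N.2 w v] using h)
      (perp_le_ker_compl₂ hQ.isRefl N.2), by
    intro x y
    induction x using Submodule.Quotient.induction_on
    induction y using Submodule.Quotient.induction_on
    exact apply_comm_of_mem_etaSub hQ N.2 _ _⟩
  map_add' N N' := Subtype.ext <| Submodule.Quotient.bilin_ext fun v w => by simp
  map_smul' c N := Subtype.ext <| Submodule.Quotient.bilin_ext fun v w => by simp

@[simp]
lemma etaToSymBilin_apply_mk (hQ : Q.IsAlt) (N : etaSub Q S) (v w : H) :
    (etaToSymBilin hQ N).1 (Submodule.Quotient.mk v) (Submodule.Quotient.mk w) = Q v (N.1 w) :=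
  rfl

lemma etaToSymBilin_injective (hQ : Q.IsAlt) (hQn : Q.Nondegenerate) :
    Function.Injective (etaToSymBilin (S := S) hQ) := by
  refine (injective_iff_map_eq_zero _).2 fun N hN => Subtype.ext <| LinearMap.ext fun w => ?_
  refine hQn.2 _ fun v => ?_
  simpa using congr($hN.1 (Submodule.Quotient.mk v) (Submodule.Quotient.mk w))

variable [FiniteDimensional ℝ H]

noncomputable def endOfBilin (hQ : Q.Nondegenerate) (B : BilinForm ℝ H) : H →ₗ[ℝ] H :=
  (Q.flip.toDual hQ.flip).symm.toLinearMap ∘ₗ B.flip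

@[simp]
lemma apply_endOfBilin (hQ : Q.Nondegenerate) (B : BilinForm ℝ H) (v w : H) :
    Q v (endOfBilin hQ B w) = B v w :=
  apply_toDual_symm_apply (hB := hQ.flip) (B.flip w) v

lemma endOfBilin_mem_etaSub (hQ : Q.IsAlt) (hQn : Q.Nondegenerate)
    (B : symBilinForms (H ⧸ perp Q S)) :
    endOfBilin hQn (B.1.compl₁₂ (perp Q S).mkQ (perp Q S).mkQ) ∈ etaSub Q S := by
  refine ⟨fun v w => ?_, fun w => ?_⟩
  · rw [← hQ.neg_eq, neg_add_eq_zero]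
    simpa using B.2 _ _
  · refine (orthogonal_orthogonal hQn hQ.isRefl S).le fun v hv => ?_
    simp [(Submodule.Quotient.mk_eq_zero (perp Q S)).2 hv]

lemma etaToSymBilin_surjective (hQ : Q.IsAlt) (hQn : Q.Nondegenerate) :
    Function.Surjective (etaToSymBilin (S := S) hQ) := fun B =>
  ⟨⟨_, endOfBilin_mem_etaSub hQ hQn B⟩,
    Subtype.ext <| Submodule.Quotient.bilin_ext fun v w => by simp⟩

noncomputable def etaEquivSymBilin (hQ : Q.IsAlt) (hQn : Q.Nondegenerate) :
    etaSub Q S ≃ₗ[ℝ] symBilinForms (H ⧸ perp Q S) :=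
  .ofBijective (etaToSymBilin hQ)
    ⟨etaToSymBilin_injective hQ hQn, etaToSymBilin_surjective hQ hQn⟩

end Eta

theorem stmt_9_general {H : Type*} [AddCommGroup H] [Module ℝ H] [FiniteDimensional ℝ H]
    (m : ℕ)
    (Q : H →ₗ[ℝ] H →ₗ[ℝ] ℝ)
    (halt : ∀ v, Q v v = 0)
    (hnondeg : ∀ v, (∀ w, Q v w = 0) → v = 0)
    (S : Submodule ℝ H)
    (hm : Module.finrank ℝ S = m) :
    (∃ e : (etaSub Q S) ≃ₗ[ℝ] (symBilinForms (H ⧸ perp Q S)),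
      ∀ (N : etaSub Q S) (v w : H),
        (e N).val (Submodule.Quotient.mk v) (Submodule.Quotient.mk w)
          = Q v ((N : H →ₗ[ℝ] H) w)) ∧
    Module.finrank ℝ (etaSub Q S) = m * (m + 1) / 2 ∧
    Nonempty ((etaSub Q S) ≃ₗ[ℝ] (symMat m)) := by
  have hQ : Q.IsAlt := halt
  have hQn : Q.Nondegenerate := hQ.isRefl.nondegenerate_iff_separatingLeft.2 hnondeg
  let e := etaEquivSymBilin (S := S) hQ hQn
  let eMat := e.trans (symBilinFormsEquivSymMat ((finrank_quotient_perp hQn).trans hm))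
  refine ⟨⟨e, fun N v w => rfl⟩, ?_, ⟨eMat⟩⟩
  rw [eMat.finrank_eq, finrank_symMat]

/-- Let `(H, Q)` be a real symplectic vector space of dimension `2n`,
`S` an isotropic subspace of dimension `m`, and `η(S)` the space of infinitesimally
symplectic endomorphisms with range contained in `S`. Then `N ↦` (the symmetric bilinear
form on `H/S^⊥` induced by `φ_N(v,w) = Q(v, N w)`) is a linear isomorphism of `η(S)` onto
the space of all symmetric bilinear forms on `H/S^⊥`; in particular
`dim η(S) = m(m+1)/2` and `η(S)` is linearly isomorphic to `Sym(m, ℝ)`. -/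
theorem stmt_9 {H : Type*} [AddCommGroup H] [Module ℝ H] [FiniteDimensional ℝ H]
    (n m : ℕ) (hdim : Module.finrank ℝ H = 2 * n)
    (Q : H →ₗ[ℝ] H →ₗ[ℝ] ℝ)
    (halt : ∀ v, Q v v = 0)
    (hnondeg : ∀ v, (∀ w, Q v w = 0) → v = 0)
    (S : Submodule ℝ H)
    (hiso : ∀ s ∈ S, ∀ s' ∈ S, Q s s' = 0)
    (hm : Module.finrank ℝ S = m) :
    (∃ e : (etaSub Q S) ≃ₗ[ℝ] (symBilinForms (H ⧸ perp Q S)),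
      ∀ (N : etaSub Q S) (v w : H),
        (e N).val (Submodule.Quotient.mk v) (Submodule.Quotient.mk w)
          = Q v ((N : H →ₗ[ℝ] H) w)) ∧
    Module.finrank ℝ (etaSub Q S) = m * (m + 1) / 2 ∧
    Nonempty ((etaSub Q S) ≃ₗ[ℝ] (symMat m)) :=
  stmt_9_general m Q halt hnondeg S hm
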